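/- On R^4 with the Poisson brackets of A_{4,3} (P: P^{12}=p12 e^{x4}, P^{14}=p14 e^{x4}, P^{23}=p23; P': P'^{12}=e^{x4}(p'_{12}+a23 x3+a24 x4+a33 x3 x4), P'^{13}=a33 e^{x4} x3, P'^{14}=a33 e^{x4} x4, P'^{23}=a53 x3 + (a33 p23/p14) x4), assume p14 p23 ≠ 0. Then H1 = a53 x3/p23 + 2 a33 x4/p14 and H2 = (1/2)(a33^2 x4^2/p14^2 + (a53 x3/p23 + a33 x4/p14)^2) are in involution with respect to both brackets: {H1,H2} = {H1,H2}' = 0. -/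

import Mathlib

open scoped BigOperators

noncomputable def pd {m : ℕ} (μ : Fin m) (f : (Fin m → ℝ) → ℝ) (x : Fin m → ℝ) : ℝ :=
  fderiv ℝ f x (Pi.single μ 1)

/-- Poisson bracket associated to a bivector field `P`. -/
noncomputable def pbrk {m : ℕ} (P : (Fin m → ℝ) → Fin m → Fin m → ℝ)
    (f g : (Fin m → ℝ) → ℝ) (x : Fin m → ℝ) : ℝ :=
  ∑ μ, ∑ ν, P x μ ν * pd μ f x * pd ν g x

/-- Schouten bracket `[P,P]^{λμν}`. -/
noncomputable def schouten {m : ℕ} (P : (Fin m → ℝ) → Fin m → Fin m → ℝ)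
    (l μ ν : Fin m) (x : Fin m → ℝ) : ℝ :=
  ∑ ρ, (P x ρ l * pd ρ (fun y => P y μ ν) x
      + P x ρ ν * pd ρ (fun y => P y l μ) x
      + P x ρ μ * pd ρ (fun y => P y ν l) x)

/-- Mixed Schouten bracket `[P,Q]^{λμν}`. -/
noncomputable def schoutenMixed {m : ℕ} (P Q : (Fin m → ℝ) → Fin m → Fin m → ℝ)
    (l μ ν : Fin m) (x : Fin m → ℝ) : ℝ :=
  ∑ ρ, (P x ρ l * pd ρ (fun y => Q y μ ν) x + Q x ρ l * pd ρ (fun y => P y μ ν) x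
      + P x ρ ν * pd ρ (fun y => Q y l μ) x + Q x ρ ν * pd ρ (fun y => P y l μ) x
      + P x ρ μ * pd ρ (fun y => Q y ν l) x + Q x ρ μ * pd ρ (fun y => P y ν l) x)

/-- The Poisson bivector `P` on the group `A_{4,3}`. -/
noncomputable def P43 (p12 p14 p23 : ℝ) : (Fin 4 → ℝ) → Fin 4 → Fin 4 → ℝ :=
  fun x μ ν =>
    let A := p12 * Real.exp (x 3)
    let B := p14 * Real.exp (x 3)
    !![0, A, 0, B;
       -A, 0, p23, 0;
       0, -p23, 0, 0;
       -B, 0, 0, 0] μ ν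

/-- The Poisson bivector `P'` on the group `A_{4,3}`. -/
noncomputable def P43' (p14 p23 p12' a23 a24 a33 a53 : ℝ) :
    (Fin 4 → ℝ) → Fin 4 → Fin 4 → ℝ :=
  fun x μ ν =>
    let A := Real.exp (x 3) * (p12' + a23 * x 2 + a24 * x 3 + a33 * x 2 * x 3)
    let B := a33 * Real.exp (x 3) * x 2
    let C := a33 * Real.exp (x 3) * x 3
    let D := a53 * x 2 + a33 * p23 / p14 * x 3
    !![0, A, B, C;
       -A, 0, D, 0;
       -B, -D, 0, 0;
       -C, 0, 0, 0] μ ν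

/-! `H1` and `H2` depend only on the coordinates `x₃, x₄` (Lean indices `2, 3`), and both
bivectors vanish on the `(x₃, x₄)` block, so every term of either bracket has a vanishing factor. -/

theorem pd_eq_zero_of_update_eq {m : ℕ} {f : (Fin m → ℝ) → ℝ} {μ : Fin m}
    (hf : ∀ y t, f (Function.update y μ t) = f y) (x : Fin m → ℝ) : pd μ f x = 0 := by
  -- no differentiability is needed: otherwise `fderiv` is `0`
  by_cases hdiff : DifferentiableAt ℝ f x
  · have hline : (fun t : ℝ => f (x + t • Pi.single μ 1)) = fun _ => f x := by
      funext t
      rw [← hf x (x μ + t)]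
      congr 1
      ext ν
      rcases eq_or_ne ν μ with rfl | hν <;> simp [Function.update, *]
    rw [pd, ← hdiff.lineDeriv_eq_fderiv, lineDeriv, hline, deriv_const]
  · rw [pd, fderiv_zero_of_not_differentiableAt hdiff, zero_apply]

theorem pbrk_eq_zero_of_block_eq_zero {m : ℕ} {P : (Fin m → ℝ) → Fin m → Fin m → ℝ}
    {f g : (Fin m → ℝ) → ℝ} (S : Set (Fin m)) (x : Fin m → ℝ)
    (hP : ∀ μ ∈ S, ∀ ν ∈ S, P x μ ν = 0)
    (hf : ∀ μ ∉ S, ∀ y t, f (Function.update y μ t) = f y)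
    (hg : ∀ ν ∉ S, ∀ y t, g (Function.update y ν t) = g y) :
    pbrk P f g x = 0 := by
  refine Finset.sum_eq_zero fun μ _ => Finset.sum_eq_zero fun ν _ => ?_
  by_cases hμ : μ ∈ S
  · by_cases hν : ν ∈ S
    · rw [hP μ hμ ν hν, zero_mul, zero_mul]
    · rw [pd_eq_zero_of_update_eq (hg ν hν), mul_zero]
  · rw [pd_eq_zero_of_update_eq (hf μ hμ), mul_zero, zero_mul]

theorem A43_bi_involution_general (p12 p14 p23 p12' a23 a24 a33 a53 : ℝ) :
    let H1 : (Fin 4 → ℝ) → ℝ := fun x => a53 * x 2 / p23 + 2 * a33 * x 3 / p14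
    let H2 : (Fin 4 → ℝ) → ℝ := fun x =>
      (1 / 2) * (a33 ^ 2 * (x 3) ^ 2 / p14 ^ 2
        + (a53 * x 2 / p23 + a33 * x 3 / p14) ^ 2)
    (∀ x, pbrk (P43 p12 p14 p23) H1 H2 x = 0) ∧
    (∀ x, pbrk (P43' p14 p23 p12' a23 a24 a33 a53) H1 H2 x = 0) := by
  intro H1 H2
  have hS : ∀ μ ∉ ({2, 3} : Set (Fin 4)), (2 : Fin 4) ≠ μ ∧ (3 : Fin 4) ≠ μ := by
    intro μ hμ
    simp only [Set.mem_insert_iff, Set.mem_singleton_iff, not_or] at hμ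
    exact ⟨Ne.symm hμ.1, Ne.symm hμ.2⟩
  have hH1 : ∀ μ ∉ ({2, 3} : Set (Fin 4)), ∀ y t, H1 (Function.update y μ t) = H1 y := by
    intro μ hμ y t
    simp only [H1, Function.update_of_ne (hS μ hμ).1, Function.update_of_ne (hS μ hμ).2]
  have hH2 : ∀ μ ∉ ({2, 3} : Set (Fin 4)), ∀ y t, H2 (Function.update y μ t) = H2 y := by
    intro μ hμ y t
    simp only [H2, Function.update_of_ne (hS μ hμ).1, Function.update_of_ne (hS μ hμ).2]
  refine ⟨fun x => pbrk_eq_zero_of_block_eq_zero {2, 3} x ?_ hH1 hH2,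
    fun x => pbrk_eq_zero_of_block_eq_zero {2, 3} x ?_ hH1 hH2⟩ <;>
  · rintro μ (rfl | rfl) ν (rfl | rfl) <;> simp [P43, P43']

theorem A43_bi_involution (p12 p14 p23 p12' a23 a24 a33 a53 : ℝ)
    (hne : p14 * p23 ≠ 0) :
    let H1 : (Fin 4 → ℝ) → ℝ := fun x => a53 * x 2 / p23 + 2 * a33 * x 3 / p14
    let H2 : (Fin 4 → ℝ) → ℝ := fun x =>
      (1 / 2) * (a33 ^ 2 * (x 3) ^ 2 / p14 ^ 2
        + (a53 * x 2 / p23 + a33 * x 3 / p14) ^ 2)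
    (∀ x, pbrk (P43 p12 p14 p23) H1 H2 x = 0) ∧
    (∀ x, pbrk (P43' p14 p23 p12' a23 a24 a33 a53) H1 H2 x = 0) :=
  A43_bi_involution_general p12 p14 p23 p12' a23 a24 a33 a53
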